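/- Fine's equivalence theorem: for any behaviour ℘ on a correlation scenario S = (I, M, O), the following are equivalent. (i) ℘ admits a factorizable local hidden-variable model: there exist a measurable space Λ, a probability measure μ on Λ, and for each party i ∈ I, each input x_i ∈ M_i and each output a_i ∈ O_{x_i} a μ-measurable function λ ↦ P_i(a_i | x_i, λ) with P_i(a_i | x_i, λ) ≥ 0 and ∑_{a_i ∈ O_{x_i}} P_i(a_i | x_i, λ) = 1 for all λ, such that ℘(a|x) = ∫_Λ ∏_{i∈I} P_i(a_i | x_i, λ) dμ(λ) for every input string x and output string a. (ii) There exists a probability distribution P on the finite set ∏_{i∈I} ∏_{x_i∈M_i} O_{x_i} of deterministic assignments α of an outcome α_{i,x_i} ∈ O_{x_i} to every input of every party, such that for every input string x and output string a, ℘(a|x) = P({α : α_{i,x_i} = a_i for all i ∈ I}). (iii) ℘ ∈ B(S); equivalently, there exist a finite set Λ, weights p(λ) ≥ 0 with ∑_{λ∈Λ} p(λ) = 1, and {0,1}-valued probability distributions D_i(· | x_i, λ) on O_{x_i} for each i, x_i, λ, such that ℘(a|x) = ∑_{λ∈Λ} p(λ) ∏_{i∈I} D_i(a_i | x_i, λ)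 for all x, a. -/

import Mathlib

open scoped Classical
open MeasureTheory

noncomputable section

/-- A correlation scenario `S = (I, M, O)`: a finite set `I` of parties, for each party `i`
a finite nonempty set `M i` of inputs, and for each input `x : M i` a finite set `O i x`
of outputs with at least two elements. -/
structure Scenario where
  I : Type
  M : I → Type
  O : (i : I) → M i → Type
  fI : Fintype I
  fM : ∀ i, Fintype (M i)
  fO : ∀ i x, Fintype (O i x)
  hM : ∀ i, Nonempty (M i)
  hO : ∀ i x, 2 ≤ Fintype.card (O i x)

attribute [instance] Scenario.fI Scenario.fM Scenario.fO Scenario.hM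

instance Scenario.instNonemptyO (S : Scenario) (i : S.I) (x : S.M i) : Nonempty (S.O i x) :=
  Fintype.card_pos_iff.mp (by have := S.hO i x; omega)

/-- Input strings of a scenario. -/
abbrev InputString (S : Scenario) := ∀ i, S.M i

/-- Output strings for a given input string. -/
abbrev OutputString (S : Scenario) (x : InputString S) := ∀ i, S.O i (x i)

/-- The ambient real vector space with one coordinate `℘(a|x)` for each pair of an input
string `x` and an output string `a`. -/
abbrev Behaviour (S : Scenario) := (x : InputString S) → OutputString S x → ℝ

/-- `p` is a behaviour: each `p x` is a probability distribution on output strings. -/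
def IsBehaviour (S : Scenario) (p : Behaviour S) : Prop :=
  (∀ x a, 0 ≤ p x a) ∧ ∀ x, ∑ a, p x a = 1

/-- The marginal `℘(a_V | x)` of a behaviour on the set `V` of parties, evaluated at the
restriction of `a` to `V`. -/
def marg (S : Scenario) (p : Behaviour S) (x : InputString S) (V : Set S.I)
    (a : OutputString S x) : ℝ :=
  ∑ b : OutputString S x, if ∀ i ∈ V, b i = a i then p x b else 0

/-- No-signalling: replacing the input of party `i` (all other inputs fixed) leaves the
marginal on `I ∖ {i}` unchanged. -/
def NoSignalling (S : Scenario) (p : Behaviour S) : Prop :=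
  ∀ (i : S.I) (x : InputString S) (m : S.M i)
    (a : OutputString S x) (a' : OutputString S (Function.update x i m)),
    (∀ j, j ≠ i → HEq (a j) (a' j)) →
    marg S p x {i}ᶜ a = marg S p (Function.update x i m) {i}ᶜ a'

/-- The set `NS(S)` of no-signalling behaviours. -/
def NSset (S : Scenario) : Set (Behaviour S) :=
  {p | IsBehaviour S p ∧ NoSignalling S p}

/-- A behaviour is predictable if all its probabilities are `0` or `1`. -/
def Predictable (S : Scenario) (p : Behaviour S) : Prop :=
  ∀ x a, p x a = 0 ∨ p x a = 1

/-- The set `P_NS(S)` of predictable no-signalling behaviours. -/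
def PNS (S : Scenario) : Set (Behaviour S) :=
  {p | IsBehaviour S p ∧ NoSignalling S p ∧ Predictable S p}

/-- The Bell-local polytope `B(S) = conv(P_NS(S))`. -/
def BellSet (S : Scenario) : Set (Behaviour S) :=
  convexHull ℝ (PNS S)

/-- `F_x = {i : x i ∈ M' i}`, the context-dependent set of parties choosing an input in the
distinguished collection `M'`. -/
def Fup (S : Scenario) (M' : ∀ i, Set (S.M i)) (x : InputString S) : Set S.I :=
  {i | x i ∈ M' i}

/-- Partial predictability w.r.t. the collection `M'`: every marginal on a subset of `F_x`
is `{0,1}`-valued. -/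
def PartPredictable (S : Scenario) (M' : ∀ i, Set (S.M i)) (p : Behaviour S) : Prop :=
  ∀ (x : InputString S) (V : Set S.I), V ⊆ Fup S M' x →
    ∀ a, marg S p x V a = 0 ∨ marg S p x V a = 1

/-- The set `PP(S, M')` of behaviours partially predictable w.r.t. `M'`. -/
def PPset (S : Scenario) (M' : ∀ i, Set (S.M i)) : Set (Behaviour S) :=
  {p | IsBehaviour S p ∧ PartPredictable S M' p}

/-- The set `PP_NS(S, M')` of partially predictable no-signalling behaviours. -/
def PPNS (S : Scenario) (M' : ∀ i, Set (S.M i)) : Set (Behaviour S) :=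
  {p | IsBehaviour S p ∧ NoSignalling S p ∧ PartPredictable S M' p}

/-- The partially deterministic polytope `PD(S, M') = conv(PP_NS(S, M'))`. -/
def PD (S : Scenario) (M' : ∀ i, Set (S.M i)) : Set (Behaviour S) :=
  convexHull ℝ (PPNS S M')

/-- The restricted scenario `S_{|M'}`: parties `{i : M' i ≠ ∅}`, input sets `M' i`, same
output sets. -/
def Scenario.restrict (S : Scenario) (M' : ∀ i, Set (S.M i)) : Scenario where
  I := {i : S.I // (M' i).Nonempty}
  M := fun i => ↥(M' i.1)
  O := fun i x => S.O i.1 x.1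
  fI := Subtype.fintype _
  fM := fun i => (Set.toFinite (M' i.1)).fintype
  fO := fun i x => S.fO i.1 x.1
  hM := fun i => i.2.to_subtype
  hO := fun i x => S.hO i.1 x.1

/-- A bipartition `(S_{|M'}, S_{|M'^⊥})` is nonredundant unless `M'` is everything or nothing. -/
def Nonredundant (S : Scenario) (M' : ∀ i, Set (S.M i)) : Prop :=
  ¬ (∀ i, M' i = Set.univ) ∧ ¬ (∀ i, M' i = (∅ : Set (S.M i)))

/-- Extension of an input string of `S` to an input string of the restricted scenario
`S_{|M'}` (choosing arbitrary inputs for the parties `i` with `x i ∉ M' i`). -/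
def extendInput (S : Scenario) (M' : ∀ i, Set (S.M i)) (x : InputString S) :
    InputString (S.restrict M') :=
  fun i => if h : x i.1 ∈ M' i.1 then ⟨x i.1, h⟩ else ⟨i.2.some, i.2.some_mem⟩

/-- Extension of an output string of `S` to an output string of the restricted scenario
`S_{|M'}` at the extended input string. -/
def extendOutput (S : Scenario) (M' : ∀ i, Set (S.M i)) (x : InputString S)
    (a : OutputString S x) : OutputString (S.restrict M') (extendInput S M' x) :=
  fun i =>
    if h : x i.1 ∈ M' i.1 then
      cast (congrArg (S.O i.1)
        (show x i.1 = (extendInput S M' x i).1 by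
          first
            | (unfold extendInput; split_ifs <;> first | rfl | contradiction)
            | simp [extendInput, h]))
        (a i.1)
    else Classical.arbitrary _

/-- The behaviour product `℘' ⊙ ℘'^⊥` of behaviours on the two halves `S' = S_{|M'}` and
`S'^⊥ = S_{|M'^⊥}` of a disjoint bipartition of `S`:
`(℘'⊙℘'^⊥)(a|x) = ℘'(a_{F_x}|x_{F_x}) · ℘'^⊥(a_{I∖F_x}|x_{I∖F_x})`, the factors being the
corresponding marginals (well defined for no-signalling behaviours). -/
def bprod (S : Scenario) (M' : ∀ i, Set (S.M i))
    (p' : Behaviour (S.restrict M'))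
    (p'' : Behaviour (S.restrict fun i => (M' i)ᶜ)) :
    Behaviour S :=
  fun x a =>
    marg (S.restrict M') p' (extendInput S M' x)
        {i : (S.restrict M').I | x i.1 ∈ M' i.1} (extendOutput S M' x a) *
    marg (S.restrict fun i => (M' i)ᶜ) p'' (extendInput S (fun i => (M' i)ᶜ) x)
        {i : (S.restrict fun i => (M' i)ᶜ).I | x i.1 ∈ (M' i.1)ᶜ}
        (extendOutput S (fun i => (M' i)ᶜ) x a)

/-- The product `K' ⊙ K''` of two sets of behaviours on the halves of a bipartition. -/
def bprodSet (S : Scenario) (M' : ∀ i, Set (S.M i))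
    (K' : Set (Behaviour (S.restrict M')))
    (K'' : Set (Behaviour (S.restrict fun i => (M' i)ᶜ))) :
    Set (Behaviour S) :=
  Set.image2 (bprod S M') K' K''

end

section AuxPin

lemma sum_pin {ι : Type} [Fintype ι] {κ : ι → Type} [∀ i, Fintype (κ i)]
    (f : ∀ i, κ i → ℝ) (hf : ∀ i, ∑ a, f i a = 1) (m : ι) (c : κ m) :
    ∑ β : ∀ i, κ i, (if β m = c then ∏ i, f i (β i) else 0) = f m c := by
  set g : ∀ i, κ i → ℝ := fun i a => (if (i = m → HEq a c) then 1 else 0) * f i a with hg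
  have step1 : ∀ β : ∀ i, κ i,
      ∏ i, g i (β i) = if β m = c then ∏ i, f i (β i) else 0 := by
    intro β
    by_cases h : β m = c
    · rw [if_pos h]
      refine Finset.prod_congr rfl fun i _ => ?_
      rw [hg]; simp only
      rw [if_pos, one_mul]
      rintro rfl; exact heq_of_eq h
    · rw [if_neg h]
      refine Finset.prod_eq_zero (Finset.mem_univ m) ?_
      rw [hg]; simp only
      rw [if_neg, zero_mul]
      intro hc; exact h (eq_of_heq (hc (by trivial)))
  calc ∑ β : ∀ i, κ i, (if β m = c then ∏ i, f i (β i) else 0)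
      = ∑ β : ∀ i, κ i, ∏ i, g i (β i) :=
        Finset.sum_congr rfl fun β _ => (step1 β).symm
    _ = ∏ i, ∑ a, g i a := by
        rw [← Fintype.piFinset_univ, ← Finset.prod_univ_sum]
    _ = f m c := by
        rw [Fintype.prod_eq_single m]
        · have hh : ∀ a : κ m, g m a = if a = c then f m a else 0 := by
            intro a
            by_cases h : a = c
            · rw [hg]; simp only
              rw [if_pos h, if_pos fun _ => heq_of_eq h, one_mul]
            · rw [hg]; simp only
              rw [if_neg h, if_neg fun hc => h (eq_of_heq (hc (by trivial))), zero_mul]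
          rw [Finset.sum_congr rfl fun a _ => hh a, Finset.sum_ite_eq',
            if_pos (Finset.mem_univ c)]
        · intro i hi
          have hh : ∀ a : κ i, g i a = f i a := by
            intro a; rw [hg]; simp only
            rw [if_pos (fun h => absurd h hi), one_mul]
          rw [Finset.sum_congr rfl fun a _ => hh a, hf i]

lemma sum_prod_pi {ι : Type} [Fintype ι] {κ : ι → Type} [∀ i, Fintype (κ i)]
    (f : ∀ i, κ i → ℝ) :
    ∑ β : ∀ i, κ i, ∏ i, f i (β i) = ∏ i, ∑ a, f i a := by
  rw [← Fintype.piFinset_univ]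
  exact (Finset.prod_univ_sum _ f).symm

end AuxPin

noncomputable section

def detB (S : Scenario) (α : ∀ i, (xi : S.M i) → S.O i xi) : Behaviour S :=
  fun x a => if ∀ i, a i = α i (x i) then 1 else 0

lemma detB_eq (S : Scenario) (α : ∀ i, (xi : S.M i) → S.O i xi)
    (x : InputString S) (a : OutputString S x) :
    detB S α x a = if a = (fun i => α i (x i)) then 1 else 0 := by
  unfold detB
  exact if_congr funext_iff.symm rfl rfl

lemma detB_isBehaviour (S : Scenario) (α : ∀ i, (xi : S.M i) → S.O i xi) :
    IsBehaviour S (detB S α) := by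
  constructor
  · intro x a; rw [detB_eq]; split <;> norm_num
  · intro x
    rw [Finset.sum_congr rfl fun a _ => detB_eq S α x a, Finset.sum_ite_eq',
      if_pos (Finset.mem_univ _)]

lemma detB_marg (S : Scenario) (α : ∀ i, (xi : S.M i) → S.O i xi)
    (x : InputString S) (V : Set S.I) (a : OutputString S x) :
    marg S (detB S α) x V a = if ∀ i ∈ V, α i (x i) = a i then 1 else 0 := by
  unfold marg
  have h : ∀ b : OutputString S x,
      (if ∀ i ∈ V, b i = a i then detB S α x b else 0)
        = if b = (fun i => α i (x i)) then (if ∀ i ∈ V, α i (x i) = a i then 1 else 0) else 0 := by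
    intro b
    by_cases hb : b = (fun i => α i (x i))
    · subst hb
      rw [if_pos rfl, detB_eq, if_pos rfl]
    · rw [if_neg hb, detB_eq, if_neg hb, ite_self]
  rw [Finset.sum_congr rfl fun b _ => h b, Finset.sum_ite_eq', if_pos (Finset.mem_univ _)]

lemma detB_ns (S : Scenario) (α : ∀ i, (xi : S.M i) → S.O i xi) :
    NoSignalling S (detB S α) := by
  intro i x m a a' hH
  rw [detB_marg, detB_marg]
  have key : ∀ j, j ∈ ({i}ᶜ : Set S.I) →
      ((α j (x j) = a j) ↔ (α j (Function.update x i m j) = a' j)) := by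
    intro j hj
    have hji : j ≠ i := hj
    have hx : Function.update x i m j = x j := Function.update_of_ne hji m x
    have h1 : HEq (α j (Function.update x i m j)) (α j (x j)) := by rw [hx]
    have h2 : HEq (a j) (a' j) := hH j hji
    constructor
    · intro h; exact eq_of_heq (h1.trans ((heq_of_eq h).trans h2))
    · intro h; exact eq_of_heq (h1.symm.trans ((heq_of_eq h).trans h2.symm))
  have hcond : (∀ j ∈ ({i}ᶜ : Set S.I), α j (x j) = a j) ↔
      (∀ j ∈ ({i}ᶜ : Set S.I), α j (Function.update x i m j) = a' j) :=
    ⟨fun h j hj => (key j hj).mp (h j hj), fun h j hj => (key j hj).mpr (h j hj)⟩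
  by_cases hA : ∀ j ∈ ({i}ᶜ : Set S.I), α j (x j) = a j
  · rw [if_pos hA, if_pos (hcond.mp hA)]
  · rw [if_neg hA, if_neg (fun h => hA (hcond.mpr h))]

lemma detB_mem_PNS (S : Scenario) (α : ∀ i, (xi : S.M i) → S.O i xi) :
    detB S α ∈ PNS S :=
  ⟨detB_isBehaviour S α, detB_ns S α, fun x a => by
    rw [detB_eq]; split <;> [right; left] <;> rfl⟩


lemma exists_det_of_PNS (S : Scenario) (p : Behaviour S) (h : p ∈ PNS S) :
    ∃ α : ∀ i, (xi : S.M i) → S.O i xi, ∀ x a, p x a = detB S α x a := by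
  obtain ⟨hB, hNS, hP⟩ := h
  have hex : ∀ x : InputString S, ∃ a, p x a = 1 := by
    intro x
    by_contra hc
    push_neg at hc
    have hz : ∀ a, p x a = 0 := fun a => (hP x a).resolve_right (hc a)
    have hs := hB.2 x
    rw [Finset.sum_congr rfl fun a _ => hz a, Finset.sum_const, smul_zero] at hs
    exact zero_ne_one hs
  set g : (x : InputString S) → OutputString S x := fun x => (hex x).choose with hgdef
  have hg : ∀ x, p x (g x) = 1 := fun x => (hex x).choose_spec
  have huniq : ∀ x b, p x b = 1 → b = g x := by
    intro x b hb
    by_contra hne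
    have h2 : (2 : ℝ) ≤ ∑ a, p x a := by
      calc (2 : ℝ) = ∑ a ∈ ({b, g x} : Finset (OutputString S x)), p x a := by
            rw [Finset.sum_pair hne, hb, hg]; norm_num
        _ ≤ ∑ a, p x a :=
            Finset.sum_le_sum_of_subset_of_nonneg (Finset.subset_univ _)
              (fun a _ _ => hB.1 x a)
    rw [hB.2 x] at h2
    linarith
  have hzero : ∀ x b, b ≠ g x → p x b = 0 := fun x b hb =>
    (hP x b).resolve_right fun h1 => hb (huniq x b h1)
  have margP : ∀ (x : InputString S) (V : Set S.I) (a : OutputString S x),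
      marg S p x V a = if ∀ i ∈ V, g x i = a i then 1 else 0 := by
    intro x V a
    unfold marg
    have hterm : ∀ b : OutputString S x,
        (if ∀ i ∈ V, b i = a i then p x b else 0)
          = if b = g x then (if ∀ i ∈ V, g x i = a i then 1 else 0) else 0 := by
      intro b
      by_cases hb : b = g x
      · subst hb
        rw [if_pos rfl, hg x]
      · rw [if_neg hb, hzero x b hb, ite_self]
    rw [Finset.sum_congr rfl fun b _ => hterm b, Finset.sum_ite_eq',
      if_pos (Finset.mem_univ _)]
  have onestep : ∀ (j : S.I) (x : InputString S) (m : S.M j) (k : S.I), k ≠ j →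
      HEq (g x k) (g (Function.update x j m) k) := by
    intro j x m k hkj
    set x' := Function.update x j m with hx'
    set a' : OutputString S x' := fun l =>
      if h : l = j then g x' l
      else cast (congrArg (S.O l) (Function.update_of_ne h m x).symm) (g x l) with ha'
    have hHeq : ∀ l, l ≠ j → HEq (g x l) (a' l) := by
      intro l hl
      rw [ha']
      simp only
      rw [dif_neg hl]
      exact (cast_heq _ _).symm
    have hm := hNS j x m (g x) a' hHeq
    rw [margP, margP] at hm
    rw [if_pos (fun i _ => rfl)] at hm
    have hcond : ∀ l ∈ ({j}ᶜ : Set S.I), g x' l = a' l := by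
      by_contra hcc
      rw [if_neg hcc] at hm
      exact one_ne_zero hm
    have hk' : g x' k = a' k := hcond k hkj
    rw [ha'] at hk'
    simp only at hk'
    rw [dif_neg hkj] at hk'
    rw [hk']
    exact (cast_heq _ _).symm
  have multi : ∀ s : Finset S.I, ∀ x x' : InputString S,
      (∀ j, j ∉ s → x j = x' j) → ∀ k, k ∉ s → HEq (g x k) (g x' k) := by
    intro s
    induction s using Finset.induction_on with
    | empty =>
      intro x x' hxx k _
      have : x = x' := funext fun j => hxx j (Finset.notMem_empty j)
      subst this
      rfl
    | @insert j s hjs ih =>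
      intro x x' hxx k hk
      have hkj : k ≠ j := fun h => hk (h ▸ Finset.mem_insert_self j s)
      have hks : k ∉ s := fun h => hk (Finset.mem_insert_of_mem h)
      set x'' := Function.update x j (x' j) with hx''
      have h1 : HEq (g x k) (g x'' k) := onestep j x (x' j) k hkj
      have h2 : HEq (g x'' k) (g x' k) := by
        refine ih x'' x' ?_ k hks
        intro l hl
        by_cases hlj : l = j
        · subst hlj
          rw [hx'']
          exact Function.update_self l (x' l) x
        · rw [hx'', Function.update_of_ne hlj]
          exact hxx l fun hmem => (Finset.mem_insert.mp hmem).elim hlj hl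
      exact h1.trans h2
  set c : InputString S := fun i => Classical.arbitrary (S.M i) with hc
  set α : ∀ i, (xi : S.M i) → S.O i xi := fun i xi =>
    cast (congrArg (S.O i) (Function.update_self i xi c)) (g (Function.update c i xi) i)
    with hα
  have key : ∀ (x : InputString S) (i : S.I), g x i = α i (x i) := by
    intro x i
    set y := Function.update c i (x i) with hy
    have hH : HEq (g x i) (g y i) := by
      refine multi (Finset.univ.erase i) x y ?_ i (Finset.notMem_erase i Finset.univ)
      intro j hj
      have hji : j = i := by simpa using hj
      subst hji
      rw [hy]
      exact (Function.update_self j (x j) c).symm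
    have hα2 : HEq (α i (x i)) (g y i) := by
      rw [hα]
      exact cast_heq _ _
    exact eq_of_heq (hH.trans hα2.symm)
  refine ⟨α, fun x a => ?_⟩
  have hgα : g x = fun i => α i (x i) := funext (key x)
  rw [detB_eq, ← hgα]
  by_cases ha : a = g x
  · subst ha
    rw [hg, if_pos rfl]
  · rw [hzero x a ha, if_neg ha]

end



noncomputable section

/-- (i) of Fine's theorem: `p` admits a factorizable local hidden-variable model. -/
def HasLHVModel (S : Scenario) (p : Behaviour S) : Prop :=
  ∃ (Λ : Type) (_ : MeasurableSpace Λ) (μ : Measure Λ) (_ : IsProbabilityMeasure μ)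
    (P : ∀ i, (xi : S.M i) → S.O i xi → Λ → ℝ),
    (∀ i xi ai, Measurable (P i xi ai)) ∧
    (∀ i xi ai l, 0 ≤ P i xi ai l) ∧
    (∀ i xi l, ∑ ai, P i xi ai l = 1) ∧
    ∀ (x : InputString S) (a : OutputString S x),
      p x a = ∫ l, (∏ i, P i (x i) (a i) l) ∂μ

/-- (ii) of Fine's theorem: there is a probability distribution on the finite set of
deterministic assignments of an outcome to every input of every party, recovering `p` by
marginalization. -/
def HasJointDistribution (S : Scenario) (p : Behaviour S) : Prop :=
  ∃ q : (∀ i, (xi : S.M i) → S.O i xi) → ℝ,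
    (∀ α, 0 ≤ q α) ∧ (∑ α, q α = 1) ∧
    ∀ (x : InputString S) (a : OutputString S x),
      p x a = ∑ α : ∀ i, (xi : S.M i) → S.O i xi,
        if ∀ i, α i (x i) = a i then q α else 0

/-- (iii), second form: `p` admits a local deterministic model with a finite set of hidden
variables and `{0,1}`-valued local response distributions. -/
def HasFiniteDeterministicModel (S : Scenario) (p : Behaviour S) : Prop :=
  ∃ (Λ : Type) (_ : Fintype Λ) (q : Λ → ℝ)
    (D : Λ → ∀ i, (xi : S.M i) → S.O i xi → ℝ),
    (∀ l, 0 ≤ q l) ∧ (∑ l, q l = 1) ∧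
    (∀ l i xi ai, D l i xi ai = 0 ∨ D l i xi ai = 1) ∧
    (∀ l i xi, ∑ ai, D l i xi ai = 1) ∧
    ∀ (x : InputString S) (a : OutputString S x),
      p x a = ∑ l, q l * ∏ i, D l i (x i) (a i)

section Implications

open MeasureTheory

variable (S : Scenario)

lemma joint_to_bell (p : Behaviour S) (h : HasJointDistribution S p) : p ∈ BellSet S := by
  obtain ⟨q, hq0, hq1, hqf⟩ := h
  have hrep : p = Finset.univ.centerMass q (fun α => detB S α) := by
    rw [Finset.centerMass_eq_of_sum_1 _ _ hq1]
    funext x a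
    rw [Finset.sum_apply, Finset.sum_apply, hqf x a]
    refine Finset.sum_congr rfl fun α _ => ?_
    have : (q α • detB S α) x a = q α * detB S α x a := rfl
    rw [this, detB]
    by_cases hc : ∀ i, α i (x i) = a i
    · rw [if_pos hc, if_pos fun i => (hc i).symm, mul_one]
    · rw [if_neg hc, if_neg fun hcc => hc fun i => (hcc i).symm, mul_zero]
  rw [hrep]
  exact Finset.centerMass_mem_convexHull _ (fun α _ => hq0 α) (by rw [hq1]; norm_num)
    (fun α _ => detB_mem_PNS S α)

lemma bell_to_findet (p : Behaviour S) (h : p ∈ BellSet S) :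
    HasFiniteDeterministicModel S p := by
  rw [BellSet, convexHull_eq] at h
  obtain ⟨ι, t, w, z, hw0, hw1, hz, hcm⟩ := h
  choose A hA using fun (l : {l // l ∈ t}) => exists_det_of_PNS S (z l.1) (hz l.1 l.2)
  refine ⟨{l // l ∈ t}, inferInstance, fun l => w l.1,
    fun l i xi ai => if ai = A l i xi then 1 else 0,
    fun l => hw0 l.1 l.2, ?_, ?_, ?_, ?_⟩
  · rw [Finset.sum_coe_sort t w]; exact hw1
  · intro l i xi ai
    dsimp only
    split <;> [right; left] <;> rfl
  · intro l i xi
    dsimp only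
    rw [Finset.sum_ite_eq', if_pos (Finset.mem_univ _)]
  · intro x a
    have hp : p x a = ∑ l ∈ t, w l * z l x a := by
      rw [← hcm, Finset.centerMass_eq_of_sum_1 _ _ hw1, Finset.sum_apply, Finset.sum_apply]
      rfl
    rw [hp, Finset.univ_eq_attach, ← Finset.sum_attach t (fun l => w l * z l x a)]
    refine Finset.sum_congr rfl fun l _ => ?_
    dsimp only
    congr 1
    rw [hA l x a, detB]
    by_cases hc : ∀ i, a i = A l i (x i)
    · rw [if_pos hc]
      exact (Finset.prod_eq_one fun i _ => by rw [if_pos (hc i)]).symm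
    · rw [if_neg hc]
      push_neg at hc
      obtain ⟨i, hi⟩ := hc
      exact (Finset.prod_eq_zero (Finset.mem_univ i) (by rw [if_neg hi])).symm

lemma findet_to_lhv (p : Behaviour S) (h : HasFiniteDeterministicModel S p) :
    HasLHVModel S p := by
  obtain ⟨Λ, hΛ, q, D, hq0, hq1, _hD01, hDs, hpf⟩ := h
  letI : MeasurableSpace Λ := ⊤
  haveI : MeasurableSingletonClass Λ := ⟨fun _ => MeasurableSpace.measurableSet_top⟩
  set μ : Measure Λ := ∑ l : Λ, ENNReal.ofReal (q l) • Measure.dirac l with hμ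
  have hint : ∀ (f : Λ → ℝ) (l : Λ), Integrable f (ENNReal.ofReal (q l) • Measure.dirac l) := by
    intro f l
    refine Integrable.smul_measure ?_ ENNReal.ofReal_ne_top
    refine Integrable.mono' (integrable_const (∑ k : Λ, ‖f k‖))
      (measurable_from_top.stronglyMeasurable.aestronglyMeasurable) (ae_of_all _ fun k => ?_)
    exact Finset.single_le_sum (fun k _ => norm_nonneg (f k)) (Finset.mem_univ k)
  have hIf : ∀ f : Λ → ℝ, ∫ l, f l ∂μ = ∑ l : Λ, q l * f l := by
    intro f
    rw [hμ, integral_finset_sum_measure fun l _ => hint f l]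
    refine Finset.sum_congr rfl fun l _ => ?_
    rw [integral_smul_measure, integral_dirac, ENNReal.toReal_ofReal (hq0 l), smul_eq_mul]
  haveI : IsProbabilityMeasure μ := by
    constructor
    rw [hμ, Measure.finset_sum_apply]
    have : ∀ l ∈ Finset.univ, (ENNReal.ofReal (q l) • Measure.dirac l) Set.univ
        = ENNReal.ofReal (q l) := by
      intro l _
      rw [Measure.smul_apply, Measure.dirac_apply_of_mem (Set.mem_univ l), smul_eq_mul, mul_one]
    rw [Finset.sum_congr rfl this, ← ENNReal.ofReal_sum_of_nonneg fun l _ => hq0 l, hq1,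
      ENNReal.ofReal_one]
  refine ⟨Λ, ⊤, μ, inferInstance, fun i xi ai l => D l i xi ai,
    fun i xi ai => measurable_from_top, fun i xi ai l => ?_, fun i xi l => hDs l i xi, ?_⟩
  · dsimp only
    rcases _hD01 l i xi ai with h0 | h1
    · rw [h0]
    · rw [h1]; norm_num
  · intro x a
    rw [hIf fun l => ∏ i, D l i (x i) (a i)]
    exact hpf x a

lemma lhv_to_joint (p : Behaviour S) (h : HasLHVModel S p) : HasJointDistribution S p := by
  obtain ⟨Λ, mΛ, μ, hμ, P, hPm, hP0, hPs, hpf⟩ := h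
  set F : (∀ i, (xi : S.M i) → S.O i xi) → Λ → ℝ :=
    fun A l => ∏ i, ∏ xi, P i xi (A i xi) l with hF
  have hFm : ∀ A, Measurable (F A) := by
    intro A
    refine Finset.measurable_prod _ fun i _ => ?_
    exact Finset.measurable_prod _ fun xi _ => hPm i xi (A i xi)
  have hP1 : ∀ i xi ai l, P i xi ai l ≤ 1 := by
    intro i xi ai l
    calc P i xi ai l ≤ ∑ b, P i xi b l :=
          Finset.single_le_sum (fun b _ => hP0 i xi b l) (Finset.mem_univ ai)
      _ = 1 := hPs i xi l
  have hF0 : ∀ A l, 0 ≤ F A l := fun A l =>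
    Finset.prod_nonneg fun i _ => Finset.prod_nonneg fun xi _ => hP0 i xi (A i xi) l
  have hF1 : ∀ A l, F A l ≤ 1 := fun A l =>
    Finset.prod_le_one (fun i _ => Finset.prod_nonneg fun xi _ => hP0 i xi (A i xi) l)
      (fun i _ => Finset.prod_le_one (fun xi _ => hP0 i xi (A i xi) l)
        (fun xi _ => hP1 i xi (A i xi) l))
  have hFi : ∀ A, Integrable (F A) μ := by
    intro A
    refine Integrable.mono' (integrable_const 1)
      ((hFm A).stronglyMeasurable.aestronglyMeasurable) (ae_of_all _ fun l => ?_)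
    rw [Real.norm_eq_abs, abs_le]
    exact ⟨by linarith [hF0 A l], hF1 A l⟩
  refine ⟨fun A => ∫ l, F A l ∂μ, fun A => integral_nonneg (fun l => hF0 A l), ?_, ?_⟩
  · rw [← integral_finset_sum _ fun A _ => hFi A]
    have hptw : ∀ l : Λ, ∑ A : ∀ i, (xi : S.M i) → S.O i xi, F A l = 1 := by
      intro l
      have e1 : ∑ A : ∀ i, (xi : S.M i) → S.O i xi, F A l
          = ∏ i, ∑ β : (xi : S.M i) → S.O i xi, ∏ xi, P i xi (β xi) l :=
        sum_prod_pi (fun i (β : (xi : S.M i) → S.O i xi) => ∏ xi, P i xi (β xi) l)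
      rw [e1]
      refine Finset.prod_eq_one fun i _ => ?_
      have e2 : ∑ β : (xi : S.M i) → S.O i xi, ∏ xi, P i xi (β xi) l
          = ∏ xi, ∑ ai, P i xi ai l :=
        sum_prod_pi (fun xi ai => P i xi ai l)
      rw [e2]
      exact Finset.prod_eq_one fun xi _ => hPs i xi l
    rw [integral_congr_ae (ae_of_all _ hptw)]
    simp
  · intro x a
    rw [hpf x a]
    have hterm : ∀ A : ∀ i, (xi : S.M i) → S.O i xi,
        (if ∀ i, A i (x i) = a i then ∫ l, F A l ∂μ else 0)
          = ∫ l, (if ∀ i, A i (x i) = a i then F A l else 0) ∂μ := by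
      intro A
      by_cases hc : ∀ i, A i (x i) = a i
      · rw [if_pos hc]
        exact integral_congr_ae (ae_of_all _ fun l => (if_pos hc).symm)
      · rw [if_neg hc]
        rw [show (fun l => if ∀ i, A i (x i) = a i then F A l else 0) = fun _ => (0:ℝ) from
          funext fun l => if_neg hc, integral_zero]
    have hint2 : ∀ A : ∀ i, (xi : S.M i) → S.O i xi,
        Integrable (fun l => if ∀ i, A i (x i) = a i then F A l else 0) μ := by
      intro A
      by_cases hc : ∀ i, A i (x i) = a i
      · simp only [if_pos hc]; exact hFi A
      · simp only [if_neg hc]; exact integrable_zero _ _ _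
    rw [Finset.sum_congr rfl fun A _ => hterm A,
      ← integral_finset_sum _ fun A _ => hint2 A]
    refine integral_congr_ae (ae_of_all _ fun l => ?_)
    simp only
    have hsplit : ∀ A : ∀ i, (xi : S.M i) → S.O i xi,
        (if ∀ i, A i (x i) = a i then F A l else 0)
          = ∏ i, (if A i (x i) = a i then ∏ xi, P i xi (A i xi) l else 0) := by
      intro A
      by_cases hc : ∀ i, A i (x i) = a i
      · rw [if_pos hc, hF]
        exact Finset.prod_congr rfl fun i _ => (if_pos (hc i)).symm
      · rw [if_neg hc]
        push_neg at hc
        obtain ⟨i, hi⟩ := hc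
        refine (Finset.prod_eq_zero (Finset.mem_univ i) ?_).symm
        exact if_neg hi
    refine Eq.symm ?_
    calc ∑ A : ∀ i, (xi : S.M i) → S.O i xi, (if ∀ i, A i (x i) = a i then F A l else 0)
        = ∑ A : ∀ i, (xi : S.M i) → S.O i xi,
            ∏ i, (if A i (x i) = a i then ∏ xi, P i xi (A i xi) l else 0) :=
          Finset.sum_congr rfl fun A _ => hsplit A
      _ = ∏ i, ∑ β : (xi : S.M i) → S.O i xi,
            (if β (x i) = a i then ∏ xi, P i xi (β xi) l else 0) :=
          sum_prod_pi (fun i (β : (xi : S.M i) → S.O i xi) =>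
            if β (x i) = a i then ∏ xi, P i xi (β xi) l else 0)
      _ = ∏ i, P i (x i) (a i) l :=
          Finset.prod_congr rfl fun i _ =>
            sum_pin (fun xi ai => P i xi ai l) (fun xi => hPs i xi l) (x i) (a i)

end Implications

/-- **Fine's equivalence theorem.** For any behaviour `p` on a correlation scenario `S`,
admitting a factorizable LHV model, admitting a joint distribution over all potential
outcomes of all inputs, membership in the Bell-local polytope `B(S)`, and admitting a
finite local deterministic model are all equivalent. -/
theorem fine_equivalence (S : Scenario) [Nonempty S.I] (p : Behaviour S)
    (hp : IsBehaviour S p) :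
    (HasLHVModel S p ↔ HasJointDistribution S p) ∧
    (HasJointDistribution S p ↔ p ∈ BellSet S) ∧
    (p ∈ BellSet S ↔ HasFiniteDeterministicModel S p) := by
  have h1 := lhv_to_joint S p
  have h2 := joint_to_bell S p
  have h3 := bell_to_findet S p
  have h4 := findet_to_lhv S p
  exact ⟨⟨h1, fun h => h4 (h3 (h2 h))⟩,
    ⟨h2, fun h => h1 (h4 (h3 h))⟩,
    ⟨h3, fun h => h2 (h1 (h4 h))⟩⟩

end
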